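/- arXiv:math/0406454 — 4 statements merged into one kernel-verified Lean document; each statement's English description precedes it below -/
import Mathlib

section
/- Let a, b be constants with 5b > a ≥ b > 0. Then for all positive reals x and y, (a·x/(a·x + y))² + (y/(b·x + y))² < 1. -/
theorem lemma_5_1 (a b x y : ℝ) (hab : b ≤ a) (h5 : a < 5 * b) (hb : 0 < b)
    (hx : 0 < x) (hy : 0 < y) :
    (a * x / (a * x + y)) ^ 2 + (y / (b * x + y)) ^ 2 < 1 := by
  have ha : 0 < a := lt_of_lt_of_le hb hab
  have h1 : 0 < a * x + y := by positivity
  have h2 : 0 < b * x + y := by positivity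
  rw [div_pow, div_pow, div_add_div _ _ (by positivity) (by positivity),
    div_lt_one (by positivity)]
  nlinarith [mul_pos hx hy, mul_pos (mul_pos hx hx) hy, mul_pos hx (mul_pos hy hy),
    mul_nonneg (mul_nonneg hb.le hx.le) (sq_nonneg (b*x - y)),
    mul_nonneg (mul_nonneg (mul_nonneg (sub_nonneg.2 hab) hb.le) hx.le) (mul_pos hx hx).le,
    mul_pos (mul_pos (sub_pos.2 h5) hx) (mul_pos hx hy),
    mul_pos (mul_pos (mul_pos ha hb) hb) (mul_pos hx (mul_pos hx hx)),
    mul_nonneg (mul_nonneg (sub_nonneg.2 hab) hx.le) (mul_pos hx hy).le]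
end

section
/- Key step in the proof of Lemma 5.1: for a, b, x, y > 0 with 5b > a ≥ b, one has 1 − (a·x/(a·x+y))² − (y/(b·x+y))² ≥ x²y²(5b − a)(b + a)/((a·x+y)²(b·x+y)²), using that v + c/v ≥ 2√c for v, c > 0. -/
theorem lemma_5_1_key_step (a b x y : ℝ) (ha : 0 < a) (hb : 0 < b)
    (hab : b ≤ a) (h5 : a < 5 * b) (hx : 0 < x) (hy : 0 < y) :
    1 - (a * x / (a * x + y)) ^ 2 - (y / (b * x + y)) ^ 2 ≥
      x ^ 2 * y ^ 2 * (5 * b - a) * (b + a) / ((a * x + y) ^ 2 * (b * x + y) ^ 2) := by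
  have hP : 0 < a * x + y := by positivity
  have hQ : 0 < b * x + y := by positivity
  rw [ge_iff_le, ← sub_nonneg]
  have h : 1 - (a * x / (a * x + y)) ^ 2 - (y / (b * x + y)) ^ 2 -
      x ^ 2 * y ^ 2 * (5 * b - a) * (b + a) / ((a * x + y) ^ 2 * (b * x + y) ^ 2)
      = (2 * b * x * y * ((b * x - y) ^ 2 + b * x ^ 2 * (a - b)))
        / ((a * x + y) ^ 2 * (b * x + y) ^ 2) := by
    field_simp
    ring
  rw [h]
  apply div_nonneg _ (by positivity)
  have h1 : 0 ≤ (b * x - y) ^ 2 + b * x ^ 2 * (a - b) := by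
    have : 0 ≤ b * x ^ 2 * (a - b) := by
      apply mul_nonneg (by positivity); linarith
    nlinarith [sq_nonneg (b * x - y)]
  positivity
end

section
/- Let Gamma(α, β; x) = β^α/Γ(α) · x^(α−1) e^(−βx) denote the Gamma(α, β) density at x > 0. Fix α > 1, b > 0, c > 0, and set x* = (2α/c)·log(1 + c/(2b)). Then for all x with 0 < x < x* and all β ∈ (0, c), Gamma(α, b + β/2; x) > Gamma(α, b; x); and for all x > x* and all β ∈ (0, c), Gamma(α, b + β/2; x) > Gamma(α, b + c/2; x). -/
noncomputable def gammaPdf (α β x : ℝ) : ℝ :=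
  β ^ α / Real.Gamma α * x ^ (α - 1) * Real.exp (-β * x)

/-!
At a fixed `x > 0` the density depends on the rate `β` only through the factor
`exp (α log β - β x)`. Writing `β = b + t / 2` and `L t = log (1 + t / (2 b))`, the log-ratio
of the densities with rates `b + t / 2` and `b` is `φ t = α L t - t x / 2`. Since `L` is strictly
concave with `L 0 = 0`, `L β > (β / c) L c` for `0 < β < c`; hence `φ β > (β / c) φ c`, and
`φ c` is positive or negative according as `x < x*` or `x > x*`. This gives `φ β > 0 = φ 0` in
the first case and `φ β > φ c` in the second.
-/

open Real

lemma gammaPdf_eq_exp_mul {α β : ℝ} (hβ : 0 < β) (x : ℝ) :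
    gammaPdf α β x = exp (α * log β - β * x) * (x ^ (α - 1) / Gamma α) := by
  rw [sub_eq_add_neg, exp_add, mul_comm α, ← rpow_def_of_pos hβ, gammaPdf]
  ring_nf

lemma gammaPdf_lt_gammaPdf_iff {α x β₁ β₂ : ℝ} (hα : 0 < α) (hx : 0 < x)
    (hβ₁ : 0 < β₁) (hβ₂ : 0 < β₂) :
    gammaPdf α β₁ x < gammaPdf α β₂ x ↔ α * log β₁ - β₁ * x < α * log β₂ - β₂ * x := by
  rw [gammaPdf_eq_exp_mul hβ₁, gammaPdf_eq_exp_mul hβ₂,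
    mul_lt_mul_iff_of_pos_right (by positivity), exp_lt_exp]

lemma log_one_add_div_lt_log_one_add_div {u v : ℝ} (hu : 0 < u) (huv : u < v) :
    log (1 + v) / v < log (1 + u) / u := by
  have h := strictConcaveOn_log_Ioi.secant_strict_mono (a := 1) (x := 1 + u) (y := 1 + v)
    (Set.mem_Ioi.2 one_pos) (by simp only [Set.mem_Ioi]; linarith) (by simp only [Set.mem_Ioi]; linarith)
    (by linarith) (by linarith) (by linarith)
  simpa only [log_one, sub_zero, add_sub_cancel_left] using h

lemma mul_log_one_add_div_lt {b β c : ℝ} (hb : 0 < b) (hβ : 0 < β) (hβc : β < c) :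
    β * log (1 + c / (2 * b)) < c * log (1 + β / (2 * b)) := by
  have h := log_one_add_div_lt_log_one_add_div (u := β / (2 * b)) (v := c / (2 * b))
    (by positivity) (by gcongr)
  rw [div_div_eq_mul_div, div_div_eq_mul_div, div_lt_div_iff₀ (by linarith) hβ] at h
  nlinarith

lemma log_add_half {b t : ℝ} (hb : 0 < b) (ht : 0 ≤ t) :
    log (b + t / 2) = log b + log (1 + t / (2 * b)) := by
  rw [← log_mul hb.ne' (by positivity)]
  congr 1
  field_simp

theorem lemma_4_1 (α b c : ℝ) (hα : 1 < α) (hb : 0 < b) (hc : 0 < c) :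
    (∀ x : ℝ, 0 < x → x < (2 * α / c) * Real.log (1 + c / (2 * b)) →
      ∀ β : ℝ, 0 < β → β < c → gammaPdf α (b + β / 2) x > gammaPdf α b x) ∧
    (∀ x : ℝ, x > (2 * α / c) * Real.log (1 + c / (2 * b)) →
      ∀ β : ℝ, 0 < β → β < c → gammaPdf α (b + β / 2) x > gammaPdf α (b + c / 2) x) := by
  have hα₀ : 0 < α := by linarith
  have hconcave : ∀ β, 0 < β → β < c →
      2 * α * (β * log (1 + c / (2 * b))) < 2 * α * (c * log (1 + β / (2 * b))) :=
    fun β hβ hβc ↦ mul_lt_mul_of_pos_left (mul_log_one_add_div_lt hb hβ hβc) (by positivity)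
  rw [div_mul_eq_mul_div]
  constructor
  · intro x hx hxs β hβ hβc
    rw [lt_div_iff₀ hc] at hxs
    rw [gt_iff_lt, gammaPdf_lt_gammaPdf_iff hα₀ hx hb (by positivity), log_add_half hb hβ.le]
    have := hconcave β hβ hβc
    have := mul_lt_mul_of_pos_left hxs hβ
    nlinarith
  · intro x hxs β hβ hβc
    rw [gt_iff_lt, div_lt_iff₀ hc] at hxs
    have hx : 0 < x := by nlinarith [log_pos (lt_add_of_pos_right 1 (by positivity : 0 < c / (2 * b)))]
    rw [gt_iff_lt, gammaPdf_lt_gammaPdf_iff hα₀ hx (by positivity) (by positivity),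
      log_add_half hb hβ.le, log_add_half hb hc.le]
    have := hconcave β hβ hβc
    have := mul_lt_mul_of_pos_left hxs (sub_pos.2 hβc)
    nlinarith
end

section
/- If 0 < x < (2α/c)·log(1 + c/(2b)) and 0 < β < c, with α > 1, b > 0, c > 0, then α·log(1 + β/(2b)) − xβ/2 > 0. -/
open Real

theorem mul_log_one_add_lt_log_one_add_mul {t y : ℝ} (ht₀ : 0 < t) (ht₁ : t < 1)
    (hy : -1 < y) (hy₀ : y ≠ 0) : t * log (1 + y) < log (1 + t * y) := by
  have hchord := strictConcaveOn_log_Ioi.2 (Set.mem_Ioi.2 one_pos)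
    (Set.mem_Ioi.2 (by linarith : (0 : ℝ) < 1 + y)) (fun h => hy₀ (by linarith))
    (sub_pos.2 ht₁) ht₀ (sub_add_cancel 1 t)
  have hcomb : (1 - t) • (1 : ℝ) + t • (1 + y) = 1 + t * y := by
    simp only [smul_eq_mul]; ring
  rw [hcomb, log_one, smul_eq_mul, smul_eq_mul, mul_zero, zero_add] at hchord
  exact hchord

theorem log_R0_pos_general (α b c x β : ℝ) (hα : 1 < α) (hb : 0 < b) (hc : 0 < c)
    (hx' : x < (2 * α / c) * Real.log (1 + c / (2 * b)))
    (hβ : 0 < β) (hβ' : β < c) :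
    0 < α * Real.log (1 + β / (2 * b)) - x * β / 2 := by
  have hconcave : β / c * log (1 + c / (2 * b)) < log (1 + β / c * (c / (2 * b))) :=
    mul_log_one_add_lt_log_one_add_mul (by positivity) ((div_lt_one hc).2 hβ')
      (by linarith [show 0 < c / (2 * b) by positivity]) (by positivity)
  rw [div_mul_div_cancel₀ hc.ne'] at hconcave
  refine sub_pos.2 ?_
  calc x * β / 2 < (2 * α / c) * log (1 + c / (2 * b)) * β / 2 := by gcongr
    _ = α * (β / c * log (1 + c / (2 * b))) := by field_simp
    _ < α * log (1 + β / (2 * b)) := by gcongr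

theorem log_R0_pos (α b c x β : ℝ) (hα : 1 < α) (hb : 0 < b) (hc : 0 < c)
    (hx : 0 < x) (hx' : x < (2 * α / c) * Real.log (1 + c / (2 * b)))
    (hβ : 0 < β) (hβ' : β < c) :
    0 < α * Real.log (1 + β / (2 * b)) - x * β / 2 :=
  log_R0_pos_general α b c x β hα hb hc hx' hβ hβ'
end
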